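/- arXiv:0902.4177 — 3 statements merged into one kernel-verified Lean document; each statement's English description precedes it below -/
import Mathlib

section
/- Let F be a finite field, let 1 ≤ b < c, and let G be a b×c minimal-basic polynomial generator matrix of a convolutional code C with degree δ = Σ_i ν_i ≥ 1, and let d ∈ ℕ satisfy d_free(C) = d. Then T_{dfree}(C) ≤ (d − 1)·δ + 1; equivalently, for every u ∈ F[[z]]^b and j > 0 such that (u,j) determines an element of S_{dfree}, one has j ≤ (d − 1)·δ. -/
open Polynomial Matrix

/-- The encoding map of a convolutional code with polynomial generator matrix `G`:
an information sequence `u ∈ F[[z]]^b` is mapped to the codeword `u · G ∈ F[[z]]^c`. -/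
noncomputable def encode {F : Type*} [Field F] {b c : ℕ}
    (G : Matrix (Fin b) (Fin c) (Polynomial F)) (u : Fin b → PowerSeries F) :
    Fin c → PowerSeries F :=
  fun j => ∑ i, u i * (G i j : PowerSeries F)

/-- Hamming weight of `v ∈ F[[z]]^c`: the extended-natural-number cardinality of the
set of pairs `(l, t)` such that `coeff_t (v_l) ≠ 0`. -/
noncomputable def wH {F : Type*} [Field F] {c : ℕ} (v : Fin c → PowerSeries F) : ℕ∞ :=
  {p : Fin c × ℕ | PowerSeries.coeff (R := F) p.2 (v p.1) ≠ 0}.encard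

/-- Free distance of the convolutional code generated by `G`. -/
noncomputable def dfree {F : Type*} [Field F] {b c : ℕ}
    (G : Matrix (Fin b) (Fin c) (Polynomial F)) : ℕ∞ :=
  sInf {w : ℕ∞ | ∃ v : Fin c → PowerSeries F,
    (∃ u : Fin b → PowerSeries F, v = encode G u) ∧ v ≠ 0 ∧ w = wH v}

/-- Total Hamming weight of segments `0, …, j-1` of `v`. -/
noncomputable def truncWeight {F : Type*} [Field F] {c : ℕ}
    (v : Fin c → PowerSeries F) (j : ℕ) : ℕ∞ :=
  {p : Fin c × ℕ | p.2 < j ∧ PowerSeries.coeff (R := F) p.2 (v p.1) ≠ 0}.encard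

/-- `i`-th row degree of `G`: the maximum of the natural degrees of the entries of row `i`. -/
def rowDeg {F : Type*} [Field F] {b c : ℕ}
    (G : Matrix (Fin b) (Fin c) (Polynomial F)) (i : Fin b) : ℕ :=
  Finset.univ.sup fun j => (G i j).natDegree

/-- Degree `δ` of `G`: the sum of its row degrees. -/
def degG {F : Type*} [Field F] {b c : ℕ}
    (G : Matrix (Fin b) (Fin c) (Polynomial F)) : ℕ :=
  ∑ i, rowDeg G i

/-- The controller-canonical encoder state `σ_t(u)` of `G` is nonzero: some component
`coeff_{t-s} (u_i)` with `1 ≤ s ≤ ν_i` (and `s ≤ t`, since coefficients with negative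
index are taken to be `0`) is nonzero. -/
def stateNonzero {F : Type*} [Field F] {b c : ℕ}
    (G : Matrix (Fin b) (Fin c) (Polynomial F)) (u : Fin b → PowerSeries F) (t : ℕ) : Prop :=
  ∃ i : Fin b, ∃ s : ℕ, 1 ≤ s ∧ s ≤ rowDeg G i ∧ s ≤ t ∧
    PowerSeries.coeff (R := F) (t - s) (u i) ≠ 0

/-- `G` is a generator matrix: it has rank `b` over the field of rational functions `F(z)`. -/
def IsGenerator {F : Type*} [Field F] {b c : ℕ}
    (G : Matrix (Fin b) (Fin c) (Polynomial F)) : Prop :=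
  (G.map (algebraMap (Polynomial F) (RatFunc F))).rank = b

/-- `G` is basic: it has a polynomial right inverse. -/
def IsBasic {F : Type*} [Field F] {b c : ℕ}
    (G : Matrix (Fin b) (Fin c) (Polynomial F)) : Prop :=
  ∃ H : Matrix (Fin c) (Fin b) (Polynomial F), G * H = 1

/-- The high-order coefficient matrix `[G]_h` of `G`. -/
def highOrder {F : Type*} [Field F] {b c : ℕ}
    (G : Matrix (Fin b) (Fin c) (Polynomial F)) : Matrix (Fin b) (Fin c) F :=
  fun i j => (G i j).coeff (rowDeg G i)

/-- `G` is minimal-basic: basic, and `[G]_h` has full row rank `b` over `F`. -/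
def IsMinimalBasic {F : Type*} [Field F] {b c : ℕ}
    (G : Matrix (Fin b) (Fin c) (Polynomial F)) : Prop :=
  IsBasic G ∧ (highOrder G).rank = b

/-- `(u, j)` determines an element of `S_{dfree}`: `j > 0`, the total Hamming weight of
segments `0, …, j-1` of `u·G` is strictly less than `d_free`, and `σ_t(u) ≠ 0` for all
`1 ≤ t ≤ j`. -/
def SdfreePair {F : Type*} [Field F] {b c : ℕ}
    (G : Matrix (Fin b) (Fin c) (Polynomial F)) (u : Fin b → PowerSeries F) (j : ℕ) : Prop :=
  0 < j ∧ truncWeight (encode G u) j < dfree G ∧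
    ∀ t : ℕ, 1 ≤ t → t ≤ j → stateNonzero G u t

/-!
For a minimal-basic `G`, a nonzero controller-canonical state forces a nonzero output segment
within the next `δ` steps. The states from which some input keeps the output zero for `k` steps
form a decreasing chain of subspaces of the `δ`-dimensional state space. Once the chain stalls,
each of its states starts an infinite zero-output run, so it is the state at time `δ` of a
codeword that terminates there; the polynomial right inverse makes the input of such a codeword
polynomial, and the predictable degree property (from `rank [G]_h = b`) then forces the state to
vanish. Hence the chain reaches `0` within `δ` steps.

So if `σ_t(u) ≠ 0` for `1 ≤ t ≤ j` and `j > (d - 1)δ`, then segment `0` and one segment in each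
window `(kδ, (k + 1)δ]`, `k < d - 1`, are nonzero: `d` nonzero segments before time `j`, against
`d_free = d`.
-/

section

variable {F : Type*} [Field F] {b c : ℕ}

theorem Matrix.vecMul_injective_of_rank_eq_card {m n : Type*} [Fintype m] [Fintype n]
    {M : Matrix m n F} (hM : M.rank = Fintype.card m) : Function.Injective M.vecMul := by
  rw [Matrix.vecMul_injective_iff, linearIndependent_iff_card_eq_finrank_span, Set.finrank,
    ← Matrix.rank_eq_finrank_span_row, hM]

theorem PowerSeries.coeff_mul_coe_of_natDegree_lt (f : PowerSeries F) {p : F[X]} {n : ℕ}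
    (hp : p.natDegree < n) (t : ℕ) :
    coeff t (f * (p : PowerSeries F)) =
      ∑ q ∈ Finset.range n, (if q ≤ t then coeff (t - q) f else 0) * p.coeff q := by
  conv_lhs => rw [p.as_sum_range_C_mul_X_pow' hp, ← coeToPowerSeries.ringHom_apply]
  simp only [map_sum, map_mul, map_pow, coeToPowerSeries.ringHom_apply, Polynomial.coe_C,
    Polynomial.coe_X, Finset.mul_sum, ← mul_assoc, PowerSeries.coeff_mul_X_pow',
    PowerSeries.coeff_mul_C, ite_mul, zero_mul]

theorem Nat.succ_le_encard_of_exists_mem_Ioc {P : ℕ → Prop} {δ : ℕ} (h₀ : P 0) :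
    ∀ n, (∀ k < n, ∃ t ∈ Set.Ioc (k * δ) ((k + 1) * δ), P t) →
      (n + 1 : ℕ∞) ≤ {t | t ≤ n * δ ∧ P t}.encard
  | 0, _ => by
    rw [Nat.cast_zero, zero_add]
    exact Set.one_le_encard_iff_nonempty.2 ⟨0, Nat.zero_le _, h₀⟩
  | n + 1, h => by
    obtain ⟨t, ⟨hlt, hle⟩, ht⟩ := h n n.lt_succ_self
    have hsub : insert t {t | t ≤ n * δ ∧ P t} ⊆ {t | t ≤ (n + 1) * δ ∧ P t} := by
      rintro s (rfl | ⟨hs, hPs⟩)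
      · exact ⟨hle, ht⟩
      · exact ⟨hs.trans (Nat.mul_le_mul_right δ n.le_succ), hPs⟩
    calc ((n + 1 + 1 : ℕ) : ℕ∞) = (n + 1 : ℕ∞) + 1 := by push_cast; rfl
      _ ≤ {t | t ≤ n * δ ∧ P t}.encard + 1 := by
        gcongr
        exact Nat.succ_le_encard_of_exists_mem_Ioc h₀ n fun k hk => h k (by omega)
      _ = (insert t {t | t ≤ n * δ ∧ P t}).encard :=
        (Set.encard_insert_of_notMem fun hmem => by have := hmem.1; omega).symm
      _ ≤ _ := Set.encard_le_encard hsub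

theorem natDegree_le_rowDeg (G : Matrix (Fin b) (Fin c) F[X]) (i : Fin b) (l : Fin c) :
    (G i l).natDegree ≤ rowDeg G i :=
  Finset.le_sup (f := fun l => (G i l).natDegree) (Finset.mem_univ l)

theorem rowDeg_le_degG (G : Matrix (Fin b) (Fin c) F[X]) (i : Fin b) : rowDeg G i ≤ degG G :=
  Finset.single_le_sum (fun _ _ => Nat.zero_le _) (Finset.mem_univ i)

theorem exists_coeff_vecMul_ne_zero {G : Matrix (Fin b) (Fin c) F[X]}
    (hrank : (highOrder G).rank = b) {Q : Fin b → F[X]} {i : Fin b} (hQ : Q i ≠ 0) :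
    ∃ l n, (Q i).natDegree + rowDeg G i ≤ n ∧ ((Q ᵥ* G) l).coeff n ≠ 0 := by
  classical
  obtain ⟨i₁, hi₁, hmax⟩ := Finset.exists_max_image {k | Q k ≠ 0}
    (fun k => (Q k).natDegree + rowDeg G k) ⟨i, by simpa using hQ⟩
  simp only [Finset.mem_filter, Finset.mem_univ, true_and] at hi₁ hmax
  set D := (Q i₁).natDegree + rowDeg G i₁
  have hcoeff : ∀ l, ((Q ᵥ* G) l).coeff D =
      ((fun k => (Q k).coeff (D - rowDeg G k)) ᵥ* highOrder G) l := by
    intro l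
    simp only [vecMul, dotProduct, finsetSum_coeff, highOrder]
    refine Finset.sum_congr rfl fun k _ => ?_
    by_cases hk : Q k = 0
    · simp [hk]
    · have hD := hmax k hk
      have := coeff_mul_add_eq_of_natDegree_le (f := Q k) (df := D - rowDeg G k)
        (by omega) (natDegree_le_rowDeg G k l)
      rwa [Nat.sub_add_cancel (by omega)] at this
  obtain ⟨l, hl⟩ :
      ∃ l, ((fun k => (Q k).coeff (D - rowDeg G k)) ᵥ* highOrder G) l ≠ 0 := by
    by_contra! h
    have := Matrix.vecMul_injective_of_rank_eq_card (by rw [hrank, Fintype.card_fin])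
      (show _ = (0 : Fin b → F) ᵥ* highOrder G by rw [zero_vecMul]; exact funext h)
    exact hi₁ (leadingCoeff_eq_zero.1 (by simpa [D] using congrFun this i₁))
  exact ⟨l, D, hmax i hQ, by rwa [hcoeff]⟩

theorem encode_eq_vecMul (G : Matrix (Fin b) (Fin c) F[X]) (u : Fin b → PowerSeries F) :
    encode G u = u ᵥ* G.map coeToPowerSeries.ringHom :=
  rfl

theorem encode_vecMul_of_mul_eq_one {G : Matrix (Fin b) (Fin c) F[X]}
    {H : Matrix (Fin c) (Fin b) F[X]} (hGH : G * H = 1) (u : Fin b → PowerSeries F) :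
    encode G u ᵥ* H.map coeToPowerSeries.ringHom = u := by
  rw [encode_eq_vecMul, vecMul_vecMul, ← Matrix.map_mul, hGH, Matrix.map_one _ (map_zero _)
    (map_one _), vecMul_one]

theorem encode_coe (G : Matrix (Fin b) (Fin c) F[X]) (Q : Fin b → F[X]) :
    encode G (fun i => (Q i : PowerSeries F)) = fun l => ((Q ᵥ* G) l : PowerSeries F) :=
  funext fun l => (RingHom.map_vecMul coeToPowerSeries.ringHom G Q l).symm

end

namespace Encoder

variable {F : Type*} [Field F] {b c : ℕ} (G : Matrix (Fin b) (Fin c) F[X])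

/-- The state space `F^δ` of the controller-canonical encoder; coordinate `s` of block `i`
stores `coeff_{t-(s+1)} (u_i)`, so it is the paper's coordinate `s + 1`. -/
abbrev State : Type _ := (i : Fin b) → Fin (rowDeg G i) → F

noncomputable def segment {n : ℕ} (v : Fin n → PowerSeries F) (t : ℕ) : Fin n → F :=
  fun l => PowerSeries.coeff t (v l)

noncomputable def state (u : Fin b → PowerSeries F) (t : ℕ) : State G :=
  fun i s => if (s : ℕ) < t then PowerSeries.coeff (t - (s + 1)) (u i) else 0

noncomputable def output : State G × (Fin b → F) →ₗ[F] Fin c → F where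
  toFun p l := ∑ i, (p.2 i * (G i l).coeff 0 +
    ∑ s : Fin (rowDeg G i), p.1 i s * (G i l).coeff (s + 1))
  map_add' p q := by
    ext l
    simp only [Prod.fst_add, Prod.snd_add, Pi.add_apply, add_mul, Finset.sum_add_distrib]
    ring
  map_smul' r p := by
    ext l
    simp only [Prod.smul_fst, Prod.smul_snd, Pi.smul_apply, smul_eq_mul, RingHom.id_apply,
      Finset.mul_sum, mul_add, mul_assoc]

def next : State G × (Fin b → F) →ₗ[F] State G where
  toFun p i s := if h : (s : ℕ) = 0 then p.2 i else p.1 i ⟨s - 1, by omega⟩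
  map_add' p q := by
    ext i s
    by_cases hs : (s : ℕ) = 0 <;> simp [hs]
  map_smul' r p := by
    ext i s
    by_cases hs : (s : ℕ) = 0 <;> simp [hs]

variable {G}

theorem segment_encode (u : Fin b → PowerSeries F) (t : ℕ) :
    segment (encode G u) t = output G (state G u t, segment u t) := by
  ext l
  simp only [segment, encode, map_sum, output, LinearMap.coe_mk, AddHom.coe_mk, state]
  refine Finset.sum_congr rfl fun i _ => ?_
  rw [PowerSeries.coeff_mul_coe_of_natDegree_lt _ (Nat.lt_succ_of_le (natDegree_le_rowDeg G i l)),
    Finset.sum_range_succ', ← Fin.sum_univ_eq_sum_range]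
  simp only [Nat.zero_le, if_true, Nat.sub_zero, add_comm, Nat.succ_le_iff]

theorem state_succ (u : Fin b → PowerSeries F) (t : ℕ) :
    state G u (t + 1) = next G (state G u t, segment u t) := by
  ext i ⟨s, hs⟩
  cases s with
  | zero => simp [state, next, segment]
  | succ s => simp [state, next]

theorem stateNonzero_iff {u : Fin b → PowerSeries F} {t : ℕ} :
    stateNonzero G u t ↔ state G u t ≠ 0 := by
  simp only [stateNonzero, ne_eq, funext_iff, Pi.zero_apply, not_forall, state]
  constructor
  · rintro ⟨i, s, hs1, hsν, hst, hne⟩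
    exact ⟨i, ⟨s - 1, by omega⟩, by simpa [show s - 1 < t by omega, Nat.sub_add_cancel hs1]⟩
  · rintro ⟨i, s, hne⟩
    split_ifs at hne with hst
    · exact ⟨i, s + 1, by omega, s.isLt, hst, hne⟩
    · exact absurd rfl hne

variable (G) in
def run (σ : State G) (a : ℕ → Fin b → F) : ℕ → State G
  | 0 => σ
  | m + 1 => next G (run σ a m, a m)

theorem state_add (u : Fin b → PowerSeries F) (T m : ℕ) :
    state G u (T + m) = run G (state G u T) (fun k => segment u (T + k)) m := by
  induction m with
  | zero => rfl
  | succ m ih => rw [← add_assoc, state_succ, ih]; rfl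

theorem exists_state_eq_and_segment_eq {T : ℕ} (hT : ∀ i, rowDeg G i ≤ T) (σ : State G)
    (a : ℕ → Fin b → F) : ∃ u, state G u T = σ ∧ ∀ m, segment u (T + m) = a m := by
  refine ⟨fun i => PowerSeries.mk fun t =>
    if t < T then (if h : T - (t + 1) < rowDeg G i then σ i ⟨T - (t + 1), h⟩ else 0)
    else a (t - T) i, ?_, fun m => ?_⟩
  · ext i ⟨s, hs⟩
    have : s < T := by have := hT i; omega
    simp [state, this, hs, show 0 < T by omega, show T - (T - (s + 1) + 1) = s by omega]
  · ext i
    simp [segment]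

variable (G) in
/-- The states from which some input keeps the output zero for `k` steps. -/
noncomputable def silentStates : ℕ → Submodule F (State G)
  | 0 => ⊤
  | k + 1 => (LinearMap.ker (output G) ⊓ (silentStates k).comap (next G)).map
      (LinearMap.fst F _ _)

theorem mem_silentStates_succ {σ : State G} {k : ℕ} :
    σ ∈ silentStates G (k + 1) ↔
      ∃ a, output G (σ, a) = 0 ∧ next G (σ, a) ∈ silentStates G k := by
  simp [silentStates]

theorem silentStates_succ_le (k : ℕ) : silentStates G (k + 1) ≤ silentStates G k := by
  induction k with
  | zero => exact le_top
  | succ k ih =>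
    intro σ hσ
    obtain ⟨a, hout, hnext⟩ := mem_silentStates_succ.1 hσ
    exact mem_silentStates_succ.2 ⟨a, hout, ih hnext⟩

theorem state_mem_silentStates {u : Fin b → PowerSeries F} {T k : ℕ}
    (h : ∀ m < k, segment (encode G u) (T + m) = 0) : state G u T ∈ silentStates G k := by
  induction k generalizing T with
  | zero => exact Submodule.mem_top
  | succ k ih =>
    refine mem_silentStates_succ.2 ⟨segment u T, ?_, ?_⟩
    · simpa [segment_encode] using h 0 k.succ_pos
    · rw [← state_succ]
      exact ih fun m hm => by simpa [add_assoc, add_comm 1] using h (m + 1) (by omega)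

theorem exists_run_output_eq_zero {k : ℕ} (hstab : silentStates G (k + 1) = silentStates G k)
    {σ : State G} (hσ : σ ∈ silentStates G k) :
    ∃ a : ℕ → Fin b → F, ∀ m, output G (run G σ a m, a m) = 0 := by
  have hstep (τ : silentStates G k) :
      ∃ a, output G (τ.1, a) = 0 ∧ next G (τ.1, a) ∈ silentStates G k :=
    mem_silentStates_succ.1 (by rw [hstab]; exact τ.2)
  choose input hinput using hstep
  let orbit : ℕ → silentStates G k := fun m =>
    Nat.rec ⟨σ, hσ⟩ (fun _ τ => ⟨next G (τ.1, input τ), (hinput τ).2⟩) m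
  have horbit (m : ℕ) : run G σ (fun m => input (orbit m)) m = (orbit m).1 := by
    induction m with
    | zero => rfl
    | succ m ih => simp only [run, ih]; rfl
  exact ⟨fun m => input (orbit m), fun m => by rw [horbit]; exact (hinput _).1⟩

variable {H : Matrix (Fin c) (Fin b) F[X]}

theorem state_eq_zero_of_segment_encode_eq_zero (hGH : G * H = 1)
    (hrank : (highOrder G).rank = b) {u : Fin b → PowerSeries F} {T : ℕ}
    (h : ∀ n, T ≤ n → segment (encode G u) n = 0) : state G u T = 0 := by
  have htrunc : encode G u = fun l => (PowerSeries.trunc T (encode G u l) : PowerSeries F) := by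
    ext l n
    rw [Polynomial.coeff_coe, PowerSeries.coeff_trunc]
    split_ifs with hn
    · rfl
    · exact congrFun (h n (not_lt.1 hn)) l
  -- the right inverse recovers `u` from its terminating codeword, so `u` is polynomial
  set Q : Fin b → F[X] := (fun l => PowerSeries.trunc T (encode G u l)) ᵥ* H
  have hu : u = fun i => (Q i : PowerSeries F) := by
    conv_lhs => rw [← encode_vecMul_of_mul_eq_one hGH u, htrunc]
    exact funext fun i => (RingHom.map_vecMul coeToPowerSeries.ringHom H _ i).symm
  ext i ⟨s, hs⟩
  by_contra hne
  have hsT : s < T := by by_contra hsT; simp [state, hsT] at hne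
  replace hne : (Q i).coeff (T - (s + 1)) ≠ 0 := by
    simpa [state, hsT, hu, Polynomial.coeff_coe] using hne
  obtain ⟨l, n, hn, hcoeff⟩ :=
    exists_coeff_vecMul_ne_zero hrank (Q := Q) (i := i)
      fun hQ => hne (by rw [hQ, Polynomial.coeff_zero])
  have hTn : T ≤ n := by have := le_natDegree_of_ne_zero hne; omega
  apply hcoeff
  simpa [segment, hu, encode_coe, Polynomial.coeff_coe] using congrFun (h n hTn) l

theorem silentStates_eq_bot_of_succ_eq (hGH : G * H = 1) (hrank : (highOrder G).rank = b)
    {k : ℕ} (hstab : silentStates G (k + 1) = silentStates G k) : silentStates G k = ⊥ := by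
  refine (Submodule.eq_bot_iff _).2 fun σ hσ => ?_
  obtain ⟨a, ha⟩ := exists_run_output_eq_zero hstab hσ
  obtain ⟨u, rfl, hu⟩ := exists_state_eq_and_segment_eq (rowDeg_le_degG G) σ a
  refine state_eq_zero_of_segment_encode_eq_zero hGH hrank fun n hn => ?_
  obtain ⟨m, rfl⟩ := Nat.exists_eq_add_of_le hn
  rw [segment_encode, state_add, hu, funext hu]
  exact ha m

theorem finrank_silentStates_succ_le (hGH : G * H = 1) (hrank : (highOrder G).rank = b)
    (k : ℕ) :
    Module.finrank F (silentStates G (k + 1)) ≤ Module.finrank F (silentStates G k) - 1 := by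
  by_cases hstab : silentStates G (k + 1) = silentStates G k
  · rw [hstab, silentStates_eq_bot_of_succ_eq hGH hrank hstab, finrank_bot]
  · have := Submodule.finrank_lt_finrank_of_lt (lt_of_le_of_ne (silentStates_succ_le k) hstab)
    omega

theorem silentStates_degG_eq_bot (hGH : G * H = 1) (hrank : (highOrder G).rank = b) :
    silentStates G (degG G) = ⊥ := by
  have hdim (k : ℕ) : Module.finrank F (silentStates G k) ≤ degG G - k := by
    induction k with
    | zero =>
      rw [silentStates, finrank_top, Module.finrank_pi_fintype]
      simp [degG]
    | succ k ih => have := finrank_silentStates_succ_le hGH hrank k; omega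
  exact Submodule.finrank_eq_zero.1 (by simpa using hdim (degG G))

theorem exists_segment_encode_ne_zero (hGH : G * H = 1) (hrank : (highOrder G).rank = b)
    {u : Fin b → PowerSeries F} {T : ℕ} (hT : state G u T ≠ 0) :
    ∃ m < degG G, segment (encode G u) (T + m) ≠ 0 := by
  by_contra! h
  simpa [silentStates_degG_eq_bot hGH hrank, hT] using state_mem_silentStates h

theorem segment_encode_zero_ne_zero (hGH : G * H = 1) {u : Fin b → PowerSeries F}
    (hu : segment u 0 ≠ 0) : segment (encode G u) 0 ≠ 0 := by
  intro h
  apply hu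
  ext i
  rw [segment, ← encode_vecMul_of_mul_eq_one hGH u]
  simp only [vecMul, dotProduct, PowerSeries.coeff_zero_eq_constantCoeff_apply, map_sum, map_mul]
  refine Finset.sum_eq_zero fun l _ => ?_
  have hl : PowerSeries.coeff 0 (encode G u l) = 0 := congrFun h l
  rw [← PowerSeries.coeff_zero_eq_constantCoeff_apply, hl, zero_mul]

theorem encard_segment_ne_zero_le_truncWeight {n : ℕ} (v : Fin n → PowerSeries F) (j : ℕ) :
    {t | t < j ∧ segment v t ≠ 0}.encard ≤ truncWeight v j := by
  refine (Set.encard_le_encard ?_).trans (Set.encard_image_le Prod.snd _)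
  rintro t ⟨htj, ht⟩
  obtain ⟨l, hl⟩ := Function.ne_iff.1 ht
  exact ⟨(l, t), ⟨htj, hl⟩, rfl⟩

end Encoder

open Encoder

theorem Tdfree_le_of_minimalBasic_general
    {F : Type*} [Field F] {b c : ℕ}
    (G : Matrix (Fin b) (Fin c) (Polynomial F))
    (hMB : IsMinimalBasic G)
    (d : ℕ) (hd : dfree G = (d : ℕ∞)) :
    ∀ (u : Fin b → PowerSeries F) (j : ℕ), 0 < j → SdfreePair G u j →
      j ≤ (d - 1) * degG G := by
  rintro u j - ⟨hj, hweight, hstate⟩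
  obtain ⟨⟨H, hGH⟩, hrank⟩ := hMB
  rw [hd] at hweight
  by_contra! hj_gt
  have hd0 : d ≠ 0 := by rintro rfl; exact not_lt_zero hweight
  have h₀ : segment (encode G u) 0 ≠ 0 := by
    obtain ⟨i, s, hs, -, hs1, hne⟩ := hstate 1 le_rfl hj
    refine segment_encode_zero_ne_zero hGH (Function.ne_iff.2 ⟨i, ?_⟩)
    simpa [Encoder.segment, show s = 1 by omega] using hne
  have hwindow : ∀ k < d - 1,
      ∃ t ∈ Set.Ioc (k * degG G) ((k + 1) * degG G), segment (encode G u) t ≠ 0 := by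
    intro k hk
    have hkj : (k + 1) * degG G < j := (Nat.mul_le_mul_right _ (by omega)).trans_lt hj_gt
    obtain ⟨m, hm, hne⟩ := exists_segment_encode_ne_zero hGH hrank
      (stateNonzero_iff.1 (hstate (k * degG G + 1) (by omega) (by rw [add_mul] at hkj; omega)))
    exact ⟨_, ⟨by omega, by rw [add_mul]; omega⟩, hne⟩
  have hcount := Nat.succ_le_encard_of_exists_mem_Ioc h₀ (d - 1) hwindow
  have hsub : {t | t ≤ (d - 1) * degG G ∧ segment (encode G u) t ≠ 0} ⊆
      {t | t < j ∧ segment (encode G u) t ≠ 0} := fun t ht => ⟨ht.1.trans_lt hj_gt, ht.2⟩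
  have hd_le := hcount.trans ((Set.encard_le_encard hsub).trans
    (encard_segment_ne_zero_le_truncWeight _ j))
  rw [show ((d - 1 : ℕ) : ℕ∞) + 1 = d by norm_cast; omega] at hd_le
  exact (hd_le.trans_lt hweight).false

/-- for a minimal-basic generator matrix of degree `δ ≥ 1` of a convolutional
code with free distance `d`, one has `T_{dfree}(C) ≤ (d - 1)·δ + 1`; equivalently, every
pair `(u, j)` determining an element of `S_{dfree}` satisfies `j ≤ (d - 1)·δ`. -/
theorem Tdfree_le_of_minimalBasic
    {F : Type*} [Field F] [Fintype F] {b c : ℕ} (hb : 1 ≤ b) (hbc : b < c)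
    (G : Matrix (Fin b) (Fin c) (Polynomial F))
    (hGen : IsGenerator G) (hMB : IsMinimalBasic G) (hδ : 1 ≤ degG G)
    (d : ℕ) (hd : dfree G = (d : ℕ∞)) :
    ∀ (u : Fin b → PowerSeries F) (j : ℕ), 0 < j → SdfreePair G u j →
      j ≤ (d - 1) * degG G :=
  Tdfree_le_of_minimalBasic_general G hMB d hd
end

section
/- Let F be a field, let T be a b×b matrix over F[z], and let ν_k = max_l natDegree(T_{kl}) be the k-th row degree of T, with δ = Σ_k ν_k. Then for all indices i, j, the (i,j) entry of the adjugate matrix of T (which equals, up to sign, the (j,i) cofactor of T, i.e. the determinant of T with row j and column i deleted) has natural degree at most δ − ν_j. -/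
open Polynomial Matrix

lemma natDegree_sign_smul_le {F : Type*} [Field F] {b : ℕ}
    (σ : Equiv.Perm (Fin b)) (q : Polynomial F) :
    (Equiv.Perm.sign σ • q).natDegree ≤ q.natDegree := by
  rcases Int.units_eq_one_or (Equiv.Perm.sign σ) with h | h <;> rw [h]
  · rw [one_smul]
  · rw [Units.neg_smul, one_smul, natDegree_neg]

lemma natDegree_det_le_sum {F : Type*} [Field F] {b : ℕ}
    (M : Matrix (Fin b) (Fin b) (Polynomial F)) (d : Fin b → ℕ)
    (h : ∀ k l, (M k l).natDegree ≤ d k) :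
    M.det.natDegree ≤ ∑ k, d k := by
  rw [Matrix.det_apply]
  refine Polynomial.natDegree_sum_le_of_forall_le _ _ fun σ _ => ?_
  refine (natDegree_sign_smul_le σ _).trans ?_
  refine (Polynomial.natDegree_prod_le _ _).trans ?_
  calc ∑ i, (M (σ i) i).natDegree ≤ ∑ i, d (σ i) :=
        Finset.sum_le_sum fun i _ => h (σ i) i
    _ = ∑ k, d k := Equiv.sum_comp σ d

/-- if `ν_k = max_l natDegree (T k l)` are the row degrees of a square
polynomial matrix `T` and `δ = Σ_k ν_k`, then every entry `(i, j)` of the adjugate of `T`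
has natural degree at most `δ − ν_j`. -/
theorem natDegree_adjugate_le
    {F : Type*} [Field F] {b : ℕ} (T : Matrix (Fin b) (Fin b) (Polynomial F))
    (ν : Fin b → ℕ) (hν : ∀ k, ν k = Finset.univ.sup fun l => (T k l).natDegree) :
    ∀ i j : Fin b, ((T.adjugate) i j).natDegree ≤ (∑ k : Fin b, ν k) - ν j := by
  intro i j
  rw [Matrix.adjugate_apply]
  have key := natDegree_det_le_sum (T.updateRow j (Pi.single i 1))
    (fun k => if k = j then 0 else ν k) ?_
  · refine key.trans (le_of_eq ?_)
    have h2 : (∑ k : Fin b, if k = j then 0 else ν k)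
        = ∑ k ∈ Finset.univ.erase j, ν k := by
      rw [← Finset.sum_erase_add Finset.univ _ (Finset.mem_univ j), if_pos rfl, add_zero]
      exact Finset.sum_congr rfl fun x hx => if_neg (Finset.ne_of_mem_erase hx)
    have h1 : (∑ k ∈ Finset.univ.erase j, ν k) + ν j = ∑ k : Fin b, ν k :=
      Finset.sum_erase_add _ _ (Finset.mem_univ j)
    omega
  · intro k l
    by_cases hk : k = j
    · subst hk
      simp only [Matrix.updateRow_self, if_pos rfl]
      by_cases hl : l = i
      · subst hl; simp
      · rw [Pi.single_eq_of_ne hl]; simp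
    · simp only [Matrix.updateRow_ne hk, if_neg hk]
      rw [hν k]
      exact Finset.le_sup (f := fun l => (T k l).natDegree) (Finset.mem_univ l)
end

section
/- Let F be a field, let T be a b×b matrix and G a b×c matrix over F[z], and let ν_1,…,ν_b be natural numbers such that every entry in row k of T and every entry in row k of G has natural degree at most ν_k. Set δ = Σ_k ν_k, ν_max = max_k ν_k and ν_min = min_k ν_k. Then every entry of the matrix product adjugate(T)·G is a polynomial of natural degree at most δ + ν_max − ν_min. -/
open Polynomial Matrix

lemma natDegree_det_le_aux {F : Type*} [Field F] {b : ℕ}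
    (M : Matrix (Fin b) (Fin b) (Polynomial F)) (w : Fin b → ℕ)
    (hM : ∀ k l, (M k l).natDegree ≤ w k) :
    M.det.natDegree ≤ ∑ k, w k := by
  rw [Matrix.det_apply']
  refine Polynomial.natDegree_sum_le_of_forall_le _ _ fun σ _ => ?_
  refine (Polynomial.natDegree_mul_le).trans ?_
  rw [Polynomial.natDegree_intCast, zero_add]
  refine (Polynomial.natDegree_prod_le _ _).trans ?_
  calc ∑ i, (M (σ i) i).natDegree ≤ ∑ i, w (σ i) :=
        Finset.sum_le_sum fun i _ => hM _ _
    _ = ∑ k, w k := Equiv.sum_comp σ w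

/-- if every entry in row `k` of the square polynomial matrix `T` and of the
`b × c` polynomial matrix `G` has natural degree at most `ν_k`, then with `δ = Σ_k ν_k`,
`ν_max = max_k ν_k` and `ν_min = min_k ν_k`, every entry of `adjugate(T) · G` has natural
degree at most `δ + ν_max − ν_min`. -/
theorem natDegree_adjugate_mul_le
    {F : Type*} [Field F] {b c : ℕ} (hb : 0 < b)
    (T : Matrix (Fin b) (Fin b) (Polynomial F))
    (G : Matrix (Fin b) (Fin c) (Polynomial F))
    (ν : Fin b → ℕ)
    (hT : ∀ k l, (T k l).natDegree ≤ ν k)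
    (hG : ∀ k l, (G k l).natDegree ≤ ν k) :
    ∀ (i : Fin b) (j : Fin c),
      ((T.adjugate * G) i j).natDegree ≤
        (∑ k : Fin b, ν k) + Finset.univ.sup ν
          - Finset.univ.inf' (Finset.univ_nonempty_iff.mpr ⟨⟨0, hb⟩⟩) ν := by
  intro i j
  have hmin_le : Finset.univ.inf' (Finset.univ_nonempty_iff.mpr ⟨⟨0, hb⟩⟩) ν ≤
      Finset.univ.sup ν := by
    refine le_trans (Finset.inf'_le _ (Finset.mem_univ ⟨0, hb⟩)) ?_
    exact Finset.le_sup (Finset.mem_univ _)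
  have key : ((T.adjugate * G) i j).natDegree ≤ ∑ k : Fin b, ν k := by
    rw [Matrix.mul_apply]
    refine Polynomial.natDegree_sum_le_of_forall_le _ _ fun l _ => ?_
    refine (Polynomial.natDegree_mul_le).trans ?_
    have hadj : (T.adjugate i l).natDegree ≤ ∑ k ∈ Finset.univ.erase l, ν k := by
      rw [Matrix.adjugate_apply]
      have hw : ∀ k m, (((T.updateRow l (Pi.single i 1)) k m).natDegree) ≤
          (if k = l then 0 else ν k) := ?_
      · refine (natDegree_det_le_aux _ _ hw).trans (le_of_eq ?_)
        rw [← Finset.sum_erase_add _ _ (Finset.mem_univ l)]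
        rw [if_pos rfl, add_zero]
        exact Finset.sum_congr rfl fun k hk => by rw [if_neg (Finset.mem_erase.mp hk).1]
      · intro k m
        rcases eq_or_ne k l with rfl | hkl
        · simp only [Matrix.updateRow_self, if_pos rfl]
          rcases eq_or_ne m i with rfl | hmi
          · simp [Pi.single_apply]
          · simp [Pi.single_apply, hmi]
        · simp only [Matrix.updateRow_ne hkl, if_neg hkl]
          exact hT k m
    calc (T.adjugate i l).natDegree + (G l j).natDegree
        ≤ (∑ k ∈ Finset.univ.erase l, ν k) + ν l :=
          add_le_add hadj (hG l j)
      _ = ∑ k, ν k := Finset.sum_erase_add _ _ (Finset.mem_univ l)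
  omega
end
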